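/- For every A > 0 there exist B > 0 and C > 0 such that for all real x ≥ 2, the number of positive integers n ≤ x for which #Ψ*(n) + τ(n) > (log x)^B is at most C x / (log x)^A. -/

import Mathlib

/-!
Take `B = A + 2`. By Markov's inequality it suffices to show that
`∑_{n ≤ x} (#Ψ*(n) + τ(n)) ≪ x (log x)^2`. Both sums are evaluated by swapping the order of
summation: `∑_{n ≤ N} τ(n) = ∑_{d ≤ N} ⌊N/d⌋ ≤ N (1 + log N)` and
`∑_{n ≤ N} #Ψ*(n) = ∑_m ⌊N/φ(m)⌋ ≤ N ∑_{m ≤ 4N²} 1/φ(m)`, where the range of `m` is cut off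
because `m ≤ φ(m) τ(m) ≤ 2 φ(m) √m`. Finally `1/φ(m) ≤ τ(m)/m`, and `τ(m)/m` is the Dirichlet
square of `n ↦ 1/n`, so `∑_{m ≤ M} 1/φ(m) ≤ (∑_{d ≤ M} 1/d)^2 ≤ (1 + log M)^2`.
-/

open Finset Real
open scoped Nat

namespace Finset

theorem card_filter_lt_nsmul_le_sum {ι M : Type*} [AddCommMonoid M] [LinearOrder M]
    [IsOrderedAddMonoid M] (s : Finset ι) (f : ι → M) (hf : ∀ i ∈ s, 0 ≤ f i) (t : M) :
    #{i ∈ s | t < f i} • t ≤ ∑ i ∈ s, f i :=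
  (card_nsmul_le_sum _ f t fun _ hi => (mem_filter.1 hi).2.le).trans
    (sum_le_sum_of_subset_of_nonneg (filter_subset _ s) fun i hi _ => hf i hi)

theorem sum_Ioc_card_filter_dvd {ι : Type*} (s : Finset ι) (f : ι → ℕ) (N : ℕ) :
    ∑ n ∈ Ioc 0 N, #{i ∈ s | f i ∣ n} = ∑ i ∈ s, N / f i := by
  simp_rw [card_filter]
  rw [sum_comm]
  simp_rw [← card_filter, Nat.Ioc_filter_dvd_card_eq_div]

theorem sum_cast_div_le {ι α : Type*} [Field α] [LinearOrder α] [IsStrictOrderedRing α]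
    (s : Finset ι) (f : ι → ℕ) (N : ℕ) :
    ∑ i ∈ s, ((N / f i : ℕ) : α) ≤ N * ∑ i ∈ s, (f i : α)⁻¹ := by
  rw [mul_sum]
  exact sum_le_sum fun i _ => Nat.cast_div_le.trans_eq (div_eq_mul_inv _ _)

theorem sum_Ioc_inv_le_one_add_log (N : ℕ) : ∑ n ∈ Ioc 0 N, (n : ℝ)⁻¹ ≤ 1 + log N := by
  simpa [harmonic_eq_sum_Icc, ← Icc_add_one_left_eq_Ioc] using harmonic_le_one_add_log N

end Finset

namespace ArithmeticFunction

theorem sum_Ioc_mul_le {R : Type*} [Semiring R] [PartialOrder R] [IsOrderedRing R]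
    (f g : ArithmeticFunction R) (hf : ∀ n, 0 ≤ f n) (hg : ∀ n, 0 ≤ g n) (N : ℕ) :
    ∑ n ∈ Ioc 0 N, (f * g) n ≤ (∑ n ∈ Ioc 0 N, f n) * ∑ n ∈ Ioc 0 N, g n := by
  rw [sum_Ioc_mul_eq_sum_prod_filter, sum_mul_sum, ← sum_product']
  exact sum_le_sum_of_subset_of_nonneg (filter_subset _ _) fun x _ _ => mul_nonneg (hf _) (hg _)

noncomputable def reciprocal : ArithmeticFunction ℝ := ⟨fun n => (n : ℝ)⁻¹, by simp⟩

theorem reciprocal_apply (n : ℕ) : reciprocal n = (n : ℝ)⁻¹ := rfl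

theorem reciprocal_nonneg (n : ℕ) : 0 ≤ reciprocal n := inv_nonneg.2 n.cast_nonneg

theorem reciprocal_mul_reciprocal_apply (m : ℕ) :
    (reciprocal * reciprocal) m = #m.divisors / m := by
  rw [mul_apply, Nat.sum_divisorsAntidiagonal (fun a b => reciprocal a * reciprocal b)]
  have h : ∀ d ∈ m.divisors, reciprocal d * reciprocal (m / d) = (m : ℝ)⁻¹ := fun d hd => by
    rw [reciprocal_apply, reciprocal_apply, ← mul_inv, ← Nat.cast_mul,
      Nat.mul_div_cancel' (Nat.dvd_of_mem_divisors hd)]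
  rw [sum_congr rfl h, sum_const, nsmul_eq_mul, div_eq_mul_inv]

end ArithmeticFunction

namespace Nat

theorem card_divisors_le_two_mul_sqrt (m : ℕ) : #m.divisors ≤ 2 * m.sqrt := by
  set small := {d ∈ m.divisors | d * d ≤ m}
  have h_small : #small ≤ m.sqrt := by
    refine (card_le_card (t := Ioc 0 m.sqrt) fun d hd => ?_).trans (by simp)
    rw [mem_filter, mem_divisors] at hd
    exact mem_Ioc.2 ⟨pos_of_dvd_of_pos hd.1.1 (pos_of_ne_zero hd.1.2), le_sqrt.2 hd.2⟩
  -- a divisor `d` with `d * d > m` is paired with the small divisor `m / d`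
  have h_cover : m.divisors ⊆ small ∪ small.image (m / ·) := by
    intro d hd
    have hdm := mem_divisors.1 hd
    by_cases hsq : d * d ≤ m
    · exact mem_union_left _ (mem_filter.2 ⟨hd, hsq⟩)
    refine mem_union_right _ (mem_image.2 ⟨m / d, mem_filter.2 ⟨?_, ?_⟩, ?_⟩)
    · exact mem_divisors.2 ⟨div_dvd_of_dvd hdm.1, hdm.2⟩
    · have hmul : d * (m / d) = m := Nat.mul_div_cancel' hdm.1
      nlinarith
    · exact Nat.div_div_self hdm.1 hdm.2
  calc #m.divisors ≤ #small + #(small.image (m / ·)) :=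
        (card_le_card h_cover).trans (card_union_le _ _)
    _ ≤ 2 * m.sqrt := by grw [Finset.card_image_le]; omega

theorem le_totient_mul_card_divisors (m : ℕ) : m ≤ φ m * #m.divisors :=
  calc m = ∑ d ∈ m.divisors, φ d := (sum_totient m).symm
    _ ≤ ∑ _d ∈ m.divisors, φ m := sum_le_sum fun d hd =>
        le_of_dvd (totient_pos.2 (pos_of_ne_zero (mem_divisors.1 hd).2))
          (totient_dvd_of_dvd (dvd_of_mem_divisors hd))
    _ = φ m * #m.divisors := by rw [sum_const, smul_eq_mul, mul_comm]

theorem le_four_mul_totient_sq (m : ℕ) : m ≤ 4 * φ m ^ 2 := by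
  have h := (le_totient_mul_card_divisors m).trans
    (Nat.mul_le_mul_left _ (card_divisors_le_two_mul_sqrt m))
  have hsqrt : m.sqrt ≤ 2 * φ m := by
    rcases m.sqrt.eq_zero_or_pos with h0 | hpos
    · omega
    exact le_of_mul_le_mul_right (by nlinarith [sqrt_le m]) hpos
  nlinarith

end Nat

theorem sum_Ioc_inv_totient_le (M : ℕ) : ∑ m ∈ Ioc 0 M, (φ m : ℝ)⁻¹ ≤ (1 + log M) ^ 2 :=
  calc ∑ m ∈ Ioc 0 M, (φ m : ℝ)⁻¹ ≤ ∑ m ∈ Ioc 0 M, (ArithmeticFunction.reciprocal * ArithmeticFunction.reciprocal) m := by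
        refine sum_le_sum fun m hm => ?_
        have hm : 0 < m := (mem_Ioc.1 hm).1
        rw [ArithmeticFunction.reciprocal_mul_reciprocal_apply, le_div_iff₀ (by positivity),
          inv_mul_le_iff₀ (by simpa using Nat.totient_pos.2 hm)]
        exact_mod_cast Nat.le_totient_mul_card_divisors m
    _ ≤ (∑ m ∈ Ioc 0 M, ArithmeticFunction.reciprocal m) *
        ∑ m ∈ Ioc 0 M, ArithmeticFunction.reciprocal m :=
        ArithmeticFunction.sum_Ioc_mul_le _ _ ArithmeticFunction.reciprocal_nonneg
          ArithmeticFunction.reciprocal_nonneg M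
    _ ≤ (1 + log M) ^ 2 := by
        simp only [ArithmeticFunction.reciprocal_apply, sq]
        gcongr <;> exact sum_Ioc_inv_le_one_add_log M

theorem setOf_totient_dvd_eq {N n : ℕ} (hn : 0 < n) (hnN : n ≤ N) :
    {m : ℕ | 0 < m ∧ φ m ∣ n} = ↑{m ∈ Ioc 0 (4 * N ^ 2) | φ m ∣ n} := by
  ext m
  simp only [Set.mem_ofPred_eq, coe_filter, mem_Ioc, and_assoc]
  refine ⟨fun ⟨hm, hdvd⟩ => ⟨hm, ?_, hdvd⟩, fun ⟨hm, _, hdvd⟩ => ⟨hm, hdvd⟩⟩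
  have := Nat.le_of_dvd hn hdvd
  calc m ≤ 4 * φ m ^ 2 := Nat.le_four_mul_totient_sq m
    _ ≤ 4 * N ^ 2 := by gcongr; omega

theorem sum_ncard_totient_dvd_le (N : ℕ) :
    ∑ n ∈ Ioc 0 N, ({m : ℕ | 0 < m ∧ φ m ∣ n}.ncard : ℝ) ≤ N * (1 + log (4 * N ^ 2)) ^ 2 :=
  calc ∑ n ∈ Ioc 0 N, ({m : ℕ | 0 < m ∧ φ m ∣ n}.ncard : ℝ)
      = ∑ n ∈ Ioc 0 N, (#{m ∈ Ioc 0 (4 * N ^ 2) | φ m ∣ n} : ℝ) :=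
        sum_congr rfl fun n hn => by
          rw [setOf_totient_dvd_eq (mem_Ioc.1 hn).1 (mem_Ioc.1 hn).2, Set.ncard_coe_finset]
    _ = ∑ m ∈ Ioc 0 (4 * N ^ 2), ((N / φ m : ℕ) : ℝ) := by
        exact_mod_cast sum_Ioc_card_filter_dvd _ _ _
    _ ≤ N * ∑ m ∈ Ioc 0 (4 * N ^ 2), (φ m : ℝ)⁻¹ := sum_cast_div_le _ _ _
    _ ≤ N * (1 + log (4 * N ^ 2)) ^ 2 := by
        have h := sum_Ioc_inv_totient_le (4 * N ^ 2)
        push_cast at h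
        gcongr

theorem sum_card_divisors_le (N : ℕ) : ∑ n ∈ Ioc 0 N, (#n.divisors : ℝ) ≤ N * (1 + log N) :=
  calc ∑ n ∈ Ioc 0 N, (#n.divisors : ℝ) = ∑ d ∈ Ioc 0 N, ((N / d : ℕ) : ℝ) := by
        simp_rw [← ArithmeticFunction.sigma_zero_apply]
        exact_mod_cast ArithmeticFunction.sum_Ioc_sigma0_eq_sum_div N
    _ ≤ N * ∑ d ∈ Ioc 0 N, (d : ℝ)⁻¹ := sum_cast_div_le _ id _
    _ ≤ N * (1 + log N) := by gcongr; exact sum_Ioc_inv_le_one_add_log N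

theorem sum_ncard_totient_dvd_add_card_divisors_le {x : ℝ} (hx : 2 ≤ x) :
    ∑ n ∈ Ioc 0 ⌊x⌋₊, (({m : ℕ | 0 < m ∧ φ m ∣ n}.ncard : ℝ) + #n.divisors) ≤
      42 * x * log x ^ 2 := by
  set N := ⌊x⌋₊
  have hN : (N : ℝ) ≤ x := Nat.floor_le (by linarith)
  have hN1 : (1 : ℝ) ≤ N := by exact_mod_cast Nat.le_floor (by norm_num; linarith)
  have hlog2 := log_le_log (by norm_num) hx
  have hlogx : 1 / 2 ≤ log x := by linarith [log_two_gt_d9]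
  have hlogN : log N ≤ log x := log_le_log (by linarith) hN
  have hlogM_nonneg : 0 ≤ log (4 * N ^ 2) := log_nonneg (by nlinarith)
  have hlogM : 1 + log (4 * N ^ 2) ≤ 6 * log x := by
    rw [log_mul (by norm_num) (by positivity), log_pow, show (4 : ℝ) = 2 ^ 2 by norm_num, log_pow]
    push_cast
    linarith
  rw [sum_add_distrib]
  calc _ ≤ N * (1 + log (4 * N ^ 2)) ^ 2 + N * (1 + log N) :=
        add_le_add (sum_ncard_totient_dvd_le N) (sum_card_divisors_le N)
    _ ≤ x * (6 * log x) ^ 2 + x * (6 * log x ^ 2) := by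
        gcongr
        nlinarith
    _ = 42 * x * log x ^ 2 := by ring

/-- For every `A > 0` there exist `B > 0` and `C > 0` such that for all real `x ≥ 2`, the
number of positive integers `n ≤ x` with `#Ψ*(n) + τ(n) > (log x)^B` is at most
`C x / (log x)^A`, where `Ψ*(n) = {m ≥ 1 : φ(m) ∣ n}` and `τ(n)` is the number of
positive divisors of `n`. -/
theorem card_exceptional_set_le (A : ℝ) (hA : 0 < A) :
    ∃ B C : ℝ, 0 < B ∧ 0 < C ∧ ∀ x : ℝ, 2 ≤ x →
      ({n : ℕ | 0 < n ∧ (n : ℝ) ≤ x ∧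
          (Real.log x) ^ B <
            ({m : ℕ | 0 < m ∧ m.totient ∣ n}.ncard : ℝ) + (n.divisors.card : ℝ)}.ncard : ℝ)
        ≤ C * x / (Real.log x) ^ A := by
  refine ⟨A + 2, 42, by linarith, by norm_num, fun x hx => ?_⟩
  have hlogx : 0 < log x := log_pos (by linarith)
  set f : ℕ → ℝ := fun n => ({m : ℕ | 0 < m ∧ φ m ∣ n}.ncard : ℝ) + #n.divisors
  have hset : {n : ℕ | 0 < n ∧ (n : ℝ) ≤ x ∧ log x ^ (A + 2) < f n} =
      ↑{n ∈ Ioc 0 ⌊x⌋₊ | log x ^ (A + 2) < f n} := by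
    ext n
    simp [Nat.le_floor_iff (by linarith : 0 ≤ x), and_assoc]
  set E := {n ∈ Ioc 0 ⌊x⌋₊ | log x ^ (A + 2) < f n}
  rw [hset, Set.ncard_coe_finset, le_div_iff₀ (by positivity)]
  refine le_of_mul_le_mul_right ?_ (pow_pos hlogx 2)
  calc (#E : ℝ) * log x ^ A * log x ^ 2 = #E • log x ^ (A + 2) := by
        rw [rpow_add hlogx, rpow_two, nsmul_eq_mul, mul_assoc]
    _ ≤ ∑ n ∈ Ioc 0 ⌊x⌋₊, f n :=
        card_filter_lt_nsmul_le_sum _ f (fun n _ => by positivity) _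
    _ ≤ 42 * x * log x ^ 2 := sum_ncard_totient_dvd_add_card_divisors_le hx
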